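/- With f a short nilpotent in a simple Lie algebra g and the decomposition g((z⁻¹)) = h ⊕ h⊥ where h = Ker ad(f+ze) and h⊥ = Im ad(f+ze), the decomposition is a Z/2Z-grading: [h,h] ⊆ h, [h,h⊥] ⊆ h⊥, and [h⊥,h⊥] ⊆ h. In particular, for v,v₁ ∈ g₁: (i) [[f,v],[f,v₁]] ∈ g₀^f; (ii) [[f,v], ((ad f)²+2z)v₁] ∈ ((ad f)²-2z)g₁; (iii) [((ad f)²+2z)v, ((ad f)²+2z)v₁] ∈ g₀^f. -/

import Mathlib

open scoped TensorProduct

attribute [-instance] HahnSeries.instModule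

/-!
Let `gᵢ` be the `ad x`-eigenspaces, so `[gᵢ, gⱼ] ⊆ gᵢ₊ⱼ` and `g₋₂ = g₂ = 0`. For `v, v₁ ∈ g₁` put
`u = [f, v]`, `u₁ = [f, v₁]` and `w = [v, u₁] ∈ g₁`, which is symmetric in `v, v₁`. The key
identity is `[u, (ad f)² v₁] = (ad f)² w`: both sides lie in `g₋₁`, on which `ad e` is injective,
and applying `ad e` turns it into a Jacobi identity. It gives `[f, [u, u₁]] = 0` and
`[u, ((ad f)² + c) v₁] = ((ad f)² - c) w`, while the Jacobi identity with `[g₁, g₁] = g₋₂ = 0`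
gives `[((ad f)² + c) v, ((ad f)² + d) v₁] = -(c + d) [u, u₁] + (c - d) [f, w]`, which lies in the
span of `g₀^f` if `c = d` and in that of `[f, g₁]` if `c = -d`.
-/

theorem Submodule.lie_mem_of_mem_span {R L : Type*} [CommRing R] [LieRing L] [LieAlgebra R L]
    {s t : Set L} {U : Submodule R L} (h : ∀ a ∈ s, ∀ b ∈ t, ⁅a, b⁆ ∈ U) {a b : L}
    (ha : a ∈ Submodule.span R s) (hb : b ∈ Submodule.span R t) : ⁅a, b⁆ ∈ U := by
  induction ha, hb using Submodule.span_induction₂ with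
  | mem_mem a b ha hb => exact h a ha b hb
  | zero_left => simp
  | zero_right => simp
  | add_left _ _ _ _ _ _ h₁ h₂ => rw [add_lie]; exact U.add_mem h₁ h₂
  | add_right _ _ _ _ _ _ h₁ h₂ => rw [lie_add]; exact U.add_mem h₁ h₂
  | smul_left r _ _ _ _ h => rw [smul_lie]; exact U.smul_mem r h
  | smul_right r _ _ _ _ h => rw [lie_smul]; exact U.smul_mem r h

section

variable {F g : Type*} [Field F] [LieRing g] [LieAlgebra F g]

theorem lie_lie_lie_eq_sub_lie (f v v₁ : g) :
    ⁅v, ⁅f, ⁅f, v₁⁆⁆⁆ = ⁅f, ⁅v, ⁅f, v₁⁆⁆⁆ - ⁅⁅f, v⁆, ⁅f, v₁⁆⁆ := by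
  rw [lie_lie]; abel

theorem lie_lie_comm_of_lie_eq_zero {f a : g} (h : ⁅f, a⁆ = 0) (y : g) :
    ⁅a, ⁅f, y⁆⁆ = ⁅f, ⁅a, y⁆⁆ := by
  rw [leibniz_lie, ← lie_skew a f, h, neg_zero, zero_lie, zero_add]

theorem lie_lie_eq_zero_of_lie_eq_zero {x a b : g} (ha : ⁅x, a⁆ = 0) (hb : ⁅x, b⁆ = 0) :
    ⁅x, ⁅a, b⁆⁆ = 0 := by
  rw [leibniz_lie, ha, hb, zero_lie, lie_zero, add_zero]

theorem lie_lie_eq_self_of_lie_eq_zero {x a b : g} (ha : ⁅x, a⁆ = 0) (hb : ⁅x, b⁆ = b) :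
    ⁅x, ⁅a, b⁆⁆ = ⁅a, b⁆ := by
  rw [leibniz_lie, ha, hb, zero_lie, zero_add]

def IsShortGrading (x : g) : Prop :=
  ∀ y : g, ∃ ym y0 y1 : g, ⁅x, ym⁆ = -ym ∧ ⁅x, y0⁆ = 0 ∧ ⁅x, y1⁆ = y1 ∧ y = ym + y0 + y1

namespace IsShortGrading

variable {x : g}

theorem eq_zero_of_lie_eq_smul (h : IsShortGrading x) {c : F} (hc : c ^ 3 ≠ c) {w : g}
    (hw : ⁅x, w⁆ = c • w) : w = 0 := by
  have hcube : ⁅x, ⁅x, ⁅x, w⁆⁆⁆ = ⁅x, w⁆ := by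
    obtain ⟨ym, y0, y1, hm, h0, h1, rfl⟩ := h w
    simp [hm, h0, h1]
  simp only [hw, lie_smul, smul_smul, ← pow_three'] at hcube
  exact (smul_eq_zero.mp (by rw [sub_smul, hcube, sub_self])).resolve_left (sub_ne_zero.mpr hc)

end IsShortGrading

variable (F) in
structure IsShortSl2Triple (e x f : g) : Prop where
  lie_e_f : ⁅e, f⁆ = (2 : F) • x
  lie_x_e : ⁅x, e⁆ = e
  lie_x_f : ⁅x, f⁆ = -f
  isShortGrading : IsShortGrading x

namespace IsShortSl2Triple

variable {e x f a b b₁ v v₁ : g}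

theorem lie_eq_zero_of_lie_eq_self [CharZero F] (t : IsShortSl2Triple F e x f)
    (ha : ⁅x, a⁆ = a) (hb : ⁅x, b⁆ = b) : ⁅a, b⁆ = 0 :=
  t.isShortGrading.eq_zero_of_lie_eq_smul (c := (2 : F)) (by norm_num)
    (by rw [leibniz_lie, ha, hb]; module)

theorem lie_eq_zero_of_lie_eq_neg [CharZero F] (t : IsShortSl2Triple F e x f)
    (ha : ⁅x, a⁆ = -a) (hb : ⁅x, b⁆ = -b) : ⁅a, b⁆ = 0 :=
  t.isShortGrading.eq_zero_of_lie_eq_smul (c := (-2 : F)) (by norm_num)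
    (by rw [leibniz_lie, ha, hb, neg_lie, lie_neg]; module)

theorem lie_x_lie_f (t : IsShortSl2Triple F e x f) (hv : ⁅x, v⁆ = v) : ⁅x, ⁅f, v⁆⁆ = 0 := by
  rw [leibniz_lie, t.lie_x_f, hv, neg_lie, neg_add_cancel]

theorem lie_x_lie_f_lie_f (t : IsShortSl2Triple F e x f) (hv : ⁅x, v⁆ = v) :
    ⁅x, ⁅f, ⁅f, v⁆⁆⁆ = -⁅f, ⁅f, v⁆⁆ := by
  rw [leibniz_lie, t.lie_x_f, t.lie_x_lie_f hv, lie_zero, add_zero, neg_lie]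

theorem lie_e_lie_f [CharZero F] (t : IsShortSl2Triple F e x f) (hv : ⁅x, v⁆ = v) :
    ⁅e, ⁅f, v⁆⁆ = (2 : F) • v := by
  rw [leibniz_lie, t.lie_e_f, t.lie_eq_zero_of_lie_eq_self t.lie_x_e hv, lie_zero, add_zero,
    smul_lie, hv]

theorem lie_e_lie_f_lie_f [CharZero F] (t : IsShortSl2Triple F e x f) (hv : ⁅x, v⁆ = v) :
    ⁅e, ⁅f, ⁅f, v⁆⁆⁆ = (2 : F) • ⁅f, v⁆ := by
  rw [leibniz_lie, t.lie_e_f, t.lie_e_lie_f hv, lie_smul, smul_lie, t.lie_x_lie_f hv, smul_zero,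
    zero_add]

theorem lie_f_lie_e [CharZero F] (t : IsShortSl2Triple F e x f) (hb : ⁅x, b⁆ = -b) :
    ⁅f, ⁅e, b⁆⁆ = (2 : F) • b := by
  rw [leibniz_lie, ← lie_skew f e, t.lie_e_f, t.lie_eq_zero_of_lie_eq_neg t.lie_x_f hb, lie_zero,
    add_zero, neg_lie, smul_lie, hb, smul_neg, neg_neg]

theorem eq_of_lie_e_eq [CharZero F] (t : IsShortSl2Triple F e x f) (hb : ⁅x, b⁆ = -b)
    (hb₁ : ⁅x, b₁⁆ = -b₁) (h : ⁅e, b⁆ = ⁅e, b₁⁆) : b = b₁ := by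
  have h₂ := t.lie_f_lie_e hb
  rwa [h, t.lie_f_lie_e hb₁, smul_right_inj (two_ne_zero' F), eq_comm] at h₂

theorem lie_lie_f_comm [CharZero F] (t : IsShortSl2Triple F e x f) (hv : ⁅x, v⁆ = v)
    (hv₁ : ⁅x, v₁⁆ = v₁) :
    ⁅v, ⁅f, v₁⁆⁆ = ⁅v₁, ⁅f, v⁆⁆ := by
  have h := leibniz_lie f v v₁
  rw [t.lie_eq_zero_of_lie_eq_self hv hv₁, lie_zero, ← lie_skew ⁅f, v⁆] at h
  exact (neg_add_eq_zero.mp h.symm).symm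

theorem lie_x_lie_lie_f (t : IsShortSl2Triple F e x f) (hv : ⁅x, v⁆ = v) (hv₁ : ⁅x, v₁⁆ = v₁) :
    ⁅x, ⁅v, ⁅f, v₁⁆⁆⁆ = ⁅v, ⁅f, v₁⁆⁆ := by
  rw [leibniz_lie, hv, t.lie_x_lie_f hv₁, lie_zero, add_zero]

theorem lie_lie_f_lie_f_lie_f [CharZero F] (t : IsShortSl2Triple F e x f) (hv : ⁅x, v⁆ = v)
    (hv₁ : ⁅x, v₁⁆ = v₁) : ⁅⁅f, v⁆, ⁅f, ⁅f, v₁⁆⁆⁆ = ⁅f, ⁅f, ⁅v, ⁅f, v₁⁆⁆⁆⁆ := by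
  have hw := t.lie_x_lie_lie_f hv hv₁
  apply t.eq_of_lie_e_eq
  · rw [leibniz_lie, t.lie_x_lie_f hv, zero_lie, zero_add, t.lie_x_lie_f_lie_f hv₁, lie_neg]
  · exact t.lie_x_lie_f_lie_f hw
  · rw [leibniz_lie, t.lie_e_lie_f hv, t.lie_e_lie_f_lie_f hv₁, t.lie_e_lie_f_lie_f hw, smul_lie,
      lie_smul, lie_lie_lie_eq_sub_lie]
    module

theorem lie_f_lie_lie_f_lie_f [CharZero F] (t : IsShortSl2Triple F e x f) (hv : ⁅x, v⁆ = v)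
    (hv₁ : ⁅x, v₁⁆ = v₁) : ⁅f, ⁅⁅f, v⁆, ⁅f, v₁⁆⁆⁆ = 0 := by
  rw [leibniz_lie, ← lie_skew, t.lie_lie_f_lie_f_lie_f hv₁ hv, t.lie_lie_f_lie_f_lie_f hv hv₁,
    t.lie_lie_f_comm hv₁ hv, neg_add_cancel]

theorem lie_x_lie_lie_f_lie_f (t : IsShortSl2Triple F e x f) (hv : ⁅x, v⁆ = v)
    (hv₁ : ⁅x, v₁⁆ = v₁) : ⁅x, ⁅⁅f, v⁆, ⁅f, v₁⁆⁆⁆ = 0 :=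
  lie_lie_eq_zero_of_lie_eq_zero (t.lie_x_lie_f hv) (t.lie_x_lie_f hv₁)

end IsShortSl2Triple

section BaseChange

open Submodule

variable {A : Type*} [CommRing A] [Algebra F A]

theorem one_tmul_lie_one_tmul (a b : g) :
    ⁅(1 : A) ⊗ₜ[F] a, (1 : A) ⊗ₜ[F] b⁆ = (1 : A) ⊗ₜ[F] ⁅a, b⁆ := by
  rw [LieAlgebra.ExtendScalars.bracket_tmul, one_mul]

variable (F) in
/-- The paper's `((ad f)² + c) v`. -/
def adSqAdd (f : g) (c : A) (v : g) : A ⊗[F] g :=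
  (1 : A) ⊗ₜ[F] ⁅f, ⁅f, v⁆⁆ + c • ((1 : A) ⊗ₜ[F] v)

theorem adSqAdd_neg (f : g) (c : A) (v : g) :
    adSqAdd F f (-c) v = (1 : A) ⊗ₜ[F] ⁅f, ⁅f, v⁆⁆ - c • ((1 : A) ⊗ₜ[F] v) := by
  rw [adSqAdd, neg_smul, sub_eq_add_neg]

variable (F A) in
def centralizerGens (x f : g) : Set (A ⊗[F] g) :=
  {w | ∃ a : g, ⁅x, a⁆ = 0 ∧ ⁅f, a⁆ = 0 ∧ w = (1 : A) ⊗ₜ[F] a}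

variable (F) in
def kerSpan (x f : g) (c : A) : Submodule A (A ⊗[F] g) :=
  span A (centralizerGens F A x f ∪
    {w | ∃ v : g, ⁅x, v⁆ = v ∧ w = (1 : A) ⊗ₜ[F] ⁅f, ⁅f, v⁆⁆ - c • ((1 : A) ⊗ₜ[F] v)})

variable (F) in
def imSpan (x f : g) (c : A) : Submodule A (A ⊗[F] g) :=
  span A ({w | ∃ v : g, ⁅x, v⁆ = v ∧ w = (1 : A) ⊗ₜ[F] ⁅f, v⁆} ∪
    {w | ∃ v : g, ⁅x, v⁆ = v ∧ w = adSqAdd F f c v})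

variable {x f a v : g} {c : A}

theorem one_tmul_mem_kerSpan (hxa : ⁅x, a⁆ = 0) (hfa : ⁅f, a⁆ = 0) :
    (1 : A) ⊗ₜ[F] a ∈ kerSpan F x f c :=
  subset_span (Or.inl ⟨a, hxa, hfa, rfl⟩)

theorem adSqAdd_neg_mem_kerSpan (hv : ⁅x, v⁆ = v) : adSqAdd F f (-c) v ∈ kerSpan F x f c :=
  subset_span (Or.inr ⟨v, hv, adSqAdd_neg f c v⟩)

theorem span_centralizerGens_le_kerSpan : span A (centralizerGens F A x f) ≤ kerSpan F x f c :=
  span_mono Set.subset_union_left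

theorem one_tmul_lie_mem_imSpan (hv : ⁅x, v⁆ = v) : (1 : A) ⊗ₜ[F] ⁅f, v⁆ ∈ imSpan F x f c :=
  subset_span (Or.inl ⟨v, hv, rfl⟩)

theorem adSqAdd_mem_imSpan (hv : ⁅x, v⁆ = v) : adSqAdd F f c v ∈ imSpan F x f c :=
  subset_span (Or.inr ⟨v, hv, rfl⟩)

theorem lie_one_tmul_adSqAdd (ha : ⁅f, a⁆ = 0) (c : A) (v : g) :
    ⁅(1 : A) ⊗ₜ[F] a, adSqAdd F f c v⁆ = adSqAdd F f c ⁅a, v⁆ := by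
  rw [adSqAdd, adSqAdd, lie_add, lie_smul, one_tmul_lie_one_tmul, one_tmul_lie_one_tmul,
    lie_lie_comm_of_lie_eq_zero ha, lie_lie_comm_of_lie_eq_zero ha]

end BaseChange

namespace IsShortSl2Triple

open Submodule

variable [CharZero F] {A : Type*} [CommRing A] [Algebra F A] {e x f v v₁ : g}

theorem lie_one_tmul_lie_f_adSqAdd (t : IsShortSl2Triple F e x f) (hv : ⁅x, v⁆ = v)
    (hv₁ : ⁅x, v₁⁆ = v₁) (c : A) :
    ⁅(1 : A) ⊗ₜ[F] ⁅f, v⁆, adSqAdd F f c v₁⁆ = adSqAdd F f (-c) ⁅v, ⁅f, v₁⁆⁆ := by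
  rw [adSqAdd, adSqAdd, lie_add, lie_smul, one_tmul_lie_one_tmul, one_tmul_lie_one_tmul,
    t.lie_lie_f_lie_f_lie_f hv hv₁, ← lie_skew ⁅f, v⁆ v₁, t.lie_lie_f_comm hv₁ hv,
    TensorProduct.tmul_neg, smul_neg, neg_smul]

theorem lie_adSqAdd_adSqAdd (t : IsShortSl2Triple F e x f) (hv : ⁅x, v⁆ = v)
    (hv₁ : ⁅x, v₁⁆ = v₁) (c d : A) :
    ⁅adSqAdd F f c v, adSqAdd F f d v₁⁆ = (-(c + d)) • ((1 : A) ⊗ₜ[F] ⁅⁅f, v⁆, ⁅f, v₁⁆⁆)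
      + (c - d) • ((1 : A) ⊗ₜ[F] ⁅f, ⁅v, ⁅f, v₁⁆⁆⁆) := by
  have hff : ⁅⁅f, ⁅f, v⁆⁆, ⁅f, ⁅f, v₁⁆⁆⁆ = 0 :=
    t.lie_eq_zero_of_lie_eq_neg (t.lie_x_lie_f_lie_f hv) (t.lie_x_lie_f_lie_f hv₁)
  have hff₁ : ⁅⁅f, ⁅f, v⁆⁆, v₁⁆ = -⁅⁅f, v⁆, ⁅f, v₁⁆⁆ - ⁅f, ⁅v, ⁅f, v₁⁆⁆⁆ := by
    rw [← lie_skew, lie_lie_lie_eq_sub_lie, t.lie_lie_f_comm hv₁ hv, ← lie_skew ⁅f, v⁆]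
    abel
  simp only [adSqAdd, lie_add, add_lie, lie_smul, smul_lie, one_tmul_lie_one_tmul, hff, hff₁,
    lie_lie_lie_eq_sub_lie, t.lie_eq_zero_of_lie_eq_self hv hv₁, TensorProduct.tmul_zero,
    TensorProduct.tmul_sub, TensorProduct.tmul_neg, smul_zero]
  module

theorem lie_adSqAdd_adSqAdd_mem_span_centralizerGens (t : IsShortSl2Triple F e x f)
    (hv : ⁅x, v⁆ = v) (hv₁ : ⁅x, v₁⁆ = v₁) (c : A) :
    ⁅adSqAdd F f c v, adSqAdd F f c v₁⁆ ∈ span A (centralizerGens F A x f) := by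
  rw [t.lie_adSqAdd_adSqAdd hv hv₁, sub_self, zero_smul, add_zero]
  exact smul_mem _ _ (subset_span
    ⟨_, t.lie_x_lie_lie_f_lie_f hv hv₁, t.lie_f_lie_lie_f_lie_f hv hv₁, rfl⟩)

variable {c : A} {a b : A ⊗[F] g}

theorem lie_mem_kerSpan (t : IsShortSl2Triple F e x f) (ha : a ∈ kerSpan F x f c)
    (hb : b ∈ kerSpan F x f c) : ⁅a, b⁆ ∈ kerSpan F x f c := by
  refine lie_mem_of_mem_span ?_ ha hb
  rintro _ (⟨a, hxa, hfa, rfl⟩ | ⟨v, hv, rfl⟩) _ (⟨a₁, hxa₁, hfa₁, rfl⟩ | ⟨v₁, hv₁, rfl⟩)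
  · rw [one_tmul_lie_one_tmul]
    exact one_tmul_mem_kerSpan (lie_lie_eq_zero_of_lie_eq_zero hxa hxa₁)
      (lie_lie_eq_zero_of_lie_eq_zero hfa hfa₁)
  · rw [← adSqAdd_neg, lie_one_tmul_adSqAdd hfa]
    exact adSqAdd_neg_mem_kerSpan (lie_lie_eq_self_of_lie_eq_zero hxa hv₁)
  · rw [← lie_skew, ← adSqAdd_neg, lie_one_tmul_adSqAdd hfa₁]
    exact neg_mem (adSqAdd_neg_mem_kerSpan (lie_lie_eq_self_of_lie_eq_zero hxa₁ hv))
  · rw [← adSqAdd_neg, ← adSqAdd_neg]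
    exact span_centralizerGens_le_kerSpan
      (t.lie_adSqAdd_adSqAdd_mem_span_centralizerGens hv hv₁ (-c))

theorem lie_mem_imSpan (t : IsShortSl2Triple F e x f) (ha : a ∈ kerSpan F x f c)
    (hb : b ∈ imSpan F x f c) : ⁅a, b⁆ ∈ imSpan F x f c := by
  refine lie_mem_of_mem_span ?_ ha hb
  rintro _ (⟨a, hxa, hfa, rfl⟩ | ⟨v, hv, rfl⟩) _ (⟨v₁, hv₁, rfl⟩ | ⟨v₁, hv₁, rfl⟩)
  · rw [one_tmul_lie_one_tmul, lie_lie_comm_of_lie_eq_zero hfa]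
    exact one_tmul_lie_mem_imSpan (lie_lie_eq_self_of_lie_eq_zero hxa hv₁)
  · rw [lie_one_tmul_adSqAdd hfa]
    exact adSqAdd_mem_imSpan (lie_lie_eq_self_of_lie_eq_zero hxa hv₁)
  · rw [← adSqAdd_neg, ← lie_skew, t.lie_one_tmul_lie_f_adSqAdd hv₁ hv, neg_neg]
    exact neg_mem (adSqAdd_mem_imSpan (t.lie_x_lie_lie_f hv₁ hv))
  · rw [← adSqAdd_neg, t.lie_adSqAdd_adSqAdd hv hv₁, neg_add_cancel, neg_zero, zero_smul,
      zero_add]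
    exact smul_mem _ _ (one_tmul_lie_mem_imSpan (t.lie_x_lie_lie_f hv hv₁))

theorem lie_mem_kerSpan_of_mem_imSpan (t : IsShortSl2Triple F e x f) (ha : a ∈ imSpan F x f c)
    (hb : b ∈ imSpan F x f c) : ⁅a, b⁆ ∈ kerSpan F x f c := by
  refine lie_mem_of_mem_span ?_ ha hb
  rintro _ (⟨v, hv, rfl⟩ | ⟨v, hv, rfl⟩) _ (⟨v₁, hv₁, rfl⟩ | ⟨v₁, hv₁, rfl⟩)
  · rw [one_tmul_lie_one_tmul]
    exact one_tmul_mem_kerSpan (t.lie_x_lie_lie_f_lie_f hv hv₁) (t.lie_f_lie_lie_f_lie_f hv hv₁)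
  · rw [t.lie_one_tmul_lie_f_adSqAdd hv hv₁]
    exact adSqAdd_neg_mem_kerSpan (t.lie_x_lie_lie_f hv hv₁)
  · rw [← lie_skew, t.lie_one_tmul_lie_f_adSqAdd hv₁ hv]
    exact neg_mem (adSqAdd_neg_mem_kerSpan (t.lie_x_lie_lie_f hv₁ hv))
  · exact span_centralizerGens_le_kerSpan (t.lie_adSqAdd_adSqAdd_mem_span_centralizerGens hv hv₁ c)

end IsShortSl2Triple

end

theorem stmt9_general {F : Type*} [Field F] [CharZero F]
    {g : Type*} [LieRing g] [LieAlgebra F g]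
    (e x f : g)
    (hef : ⁅e, f⁆ = (2 : F) • x) (hxe : ⁅x, e⁆ = e) (hxf : ⁅x, f⁆ = -f)
    (hdec : ∀ y : g, ∃ ym y0 y1 : g, ⁅x, ym⁆ = -ym ∧ ⁅x, y0⁆ = 0 ∧ ⁅x, y1⁆ = y1 ∧
      y = ym + y0 + y1)
    (z : LaurentSeries F)
    (Hk Hr : Submodule (LaurentSeries F) (LaurentSeries F ⊗[F] g))
    (hHk : Hk = Submodule.span (LaurentSeries F)
      ({w | ∃ a : g, ⁅x, a⁆ = 0 ∧ ⁅f, a⁆ = 0 ∧ w = (1 : LaurentSeries F) ⊗ₜ[F] a}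
        ∪ {w | ∃ v : g, ⁅x, v⁆ = v ∧
            w = (1 : LaurentSeries F) ⊗ₜ[F] ⁅f, ⁅f, v⁆⁆
              - ((2 : LaurentSeries F) * z) • ((1 : LaurentSeries F) ⊗ₜ[F] v)}))
    (hHr : Hr = Submodule.span (LaurentSeries F)
      ({w | ∃ v : g, ⁅x, v⁆ = v ∧ w = (1 : LaurentSeries F) ⊗ₜ[F] ⁅f, v⁆}
        ∪ {w | ∃ v : g, ⁅x, v⁆ = v ∧
            w = (1 : LaurentSeries F) ⊗ₜ[F] ⁅f, ⁅f, v⁆⁆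
              + ((2 : LaurentSeries F) * z) • ((1 : LaurentSeries F) ⊗ₜ[F] v)})) :
    (∀ a ∈ Hk, ∀ b ∈ Hk, ⁅a, b⁆ ∈ Hk) ∧
    (∀ a ∈ Hk, ∀ b ∈ Hr, ⁅a, b⁆ ∈ Hr) ∧
    (∀ a ∈ Hr, ∀ b ∈ Hr, ⁅a, b⁆ ∈ Hk) ∧
    (∀ v v₁ : g, ⁅x, v⁆ = v → ⁅x, v₁⁆ = v₁ →
      (⁅x, ⁅⁅f, v⁆, ⁅f, v₁⁆⁆⁆ = 0 ∧ ⁅f, ⁅⁅f, v⁆, ⁅f, v₁⁆⁆⁆ = 0) ∧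
      (∃ w : g, ⁅x, w⁆ = w ∧
        ⁅(1 : LaurentSeries F) ⊗ₜ[F] ⁅f, v⁆,
          (1 : LaurentSeries F) ⊗ₜ[F] ⁅f, ⁅f, v₁⁆⁆
            + ((2 : LaurentSeries F) * z) • ((1 : LaurentSeries F) ⊗ₜ[F] v₁)⁆
        = (1 : LaurentSeries F) ⊗ₜ[F] ⁅f, ⁅f, w⁆⁆
            - ((2 : LaurentSeries F) * z) • ((1 : LaurentSeries F) ⊗ₜ[F] w)) ∧
      ⁅(1 : LaurentSeries F) ⊗ₜ[F] ⁅f, ⁅f, v⁆⁆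
          + ((2 : LaurentSeries F) * z) • ((1 : LaurentSeries F) ⊗ₜ[F] v),
        (1 : LaurentSeries F) ⊗ₜ[F] ⁅f, ⁅f, v₁⁆⁆
          + ((2 : LaurentSeries F) * z) • ((1 : LaurentSeries F) ⊗ₜ[F] v₁)⁆
        ∈ Submodule.span (LaurentSeries F)
            {w | ∃ a : g, ⁅x, a⁆ = 0 ∧ ⁅f, a⁆ = 0 ∧
              w = (1 : LaurentSeries F) ⊗ₜ[F] a}) := by
  have t : IsShortSl2Triple F e x f := ⟨hef, hxe, hxf, hdec⟩
  subst hHk hHr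
  refine ⟨fun a ha b hb => t.lie_mem_kerSpan ha hb, fun a ha b hb => t.lie_mem_imSpan ha hb,
    fun a ha b hb => t.lie_mem_kerSpan_of_mem_imSpan ha hb, fun v v₁ hv hv₁ => ⟨?_, ?_, ?_⟩⟩
  · exact ⟨t.lie_x_lie_lie_f_lie_f hv hv₁, t.lie_f_lie_lie_f_lie_f hv hv₁⟩
  · exact ⟨_, t.lie_x_lie_lie_f hv hv₁,
      (t.lie_one_tmul_lie_f_adSqAdd hv hv₁ _).trans (adSqAdd_neg _ _ _)⟩
  · exact t.lie_adSqAdd_adSqAdd_mem_span_centralizerGens hv hv₁ _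

/-- For a short nilpotent f, the decomposition g((z⁻¹)) = h ⊕ h⊥, with
h = Ker ad(f+ze) = g₀^f((z⁻¹)) ⊕ ((ad f)²-2z)g₁((z⁻¹)) and
h⊥ = Im ad(f+ze) = [f,g₁]((z⁻¹)) ⊕ ((ad f)²+2z)g₁((z⁻¹)), is a ℤ/2ℤ-grading:
[h,h] ⊆ h, [h,h⊥] ⊆ h⊥, [h⊥,h⊥] ⊆ h.  In particular, for v,v₁ ∈ g₁:
(i) [[f,v],[f,v₁]] ∈ g₀^f; (ii) [[f,v],((ad f)²+2z)v₁] ∈ ((ad f)²-2z)g₁;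
(iii) [((ad f)²+2z)v, ((ad f)²+2z)v₁] ∈ g₀^f((z⁻¹)). -/
theorem stmt9 {F : Type*} [Field F] [CharZero F] [IsAlgClosed F]
    {g : Type*} [LieRing g] [LieAlgebra F g] [FiniteDimensional F g]
    [LieAlgebra.IsSimple F g]
    (e x f : g)
    (hef : ⁅e, f⁆ = (2 : F) • x) (hxe : ⁅x, e⁆ = e) (hxf : ⁅x, f⁆ = -f)
    (hdec : ∀ y : g, ∃ ym y0 y1 : g, ⁅x, ym⁆ = -ym ∧ ⁅x, y0⁆ = 0 ∧ ⁅x, y1⁆ = y1 ∧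
      y = ym + y0 + y1)
    (z : LaurentSeries F) (hz : z = HahnSeries.single (-1) 1)
    (Hk Hr : Submodule (LaurentSeries F) (LaurentSeries F ⊗[F] g))
    (hHk : Hk = Submodule.span (LaurentSeries F)
      ({w | ∃ a : g, ⁅x, a⁆ = 0 ∧ ⁅f, a⁆ = 0 ∧ w = (1 : LaurentSeries F) ⊗ₜ[F] a}
        ∪ {w | ∃ v : g, ⁅x, v⁆ = v ∧
            w = (1 : LaurentSeries F) ⊗ₜ[F] ⁅f, ⁅f, v⁆⁆
              - ((2 : LaurentSeries F) * z) • ((1 : LaurentSeries F) ⊗ₜ[F] v)}))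
    (hHr : Hr = Submodule.span (LaurentSeries F)
      ({w | ∃ v : g, ⁅x, v⁆ = v ∧ w = (1 : LaurentSeries F) ⊗ₜ[F] ⁅f, v⁆}
        ∪ {w | ∃ v : g, ⁅x, v⁆ = v ∧
            w = (1 : LaurentSeries F) ⊗ₜ[F] ⁅f, ⁅f, v⁆⁆
              + ((2 : LaurentSeries F) * z) • ((1 : LaurentSeries F) ⊗ₜ[F] v)})) :
    (∀ a ∈ Hk, ∀ b ∈ Hk, ⁅a, b⁆ ∈ Hk) ∧
    (∀ a ∈ Hk, ∀ b ∈ Hr, ⁅a, b⁆ ∈ Hr) ∧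
    (∀ a ∈ Hr, ∀ b ∈ Hr, ⁅a, b⁆ ∈ Hk) ∧
    (∀ v v₁ : g, ⁅x, v⁆ = v → ⁅x, v₁⁆ = v₁ →
      (⁅x, ⁅⁅f, v⁆, ⁅f, v₁⁆⁆⁆ = 0 ∧ ⁅f, ⁅⁅f, v⁆, ⁅f, v₁⁆⁆⁆ = 0) ∧
      (∃ w : g, ⁅x, w⁆ = w ∧
        ⁅(1 : LaurentSeries F) ⊗ₜ[F] ⁅f, v⁆,
          (1 : LaurentSeries F) ⊗ₜ[F] ⁅f, ⁅f, v₁⁆⁆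
            + ((2 : LaurentSeries F) * z) • ((1 : LaurentSeries F) ⊗ₜ[F] v₁)⁆
        = (1 : LaurentSeries F) ⊗ₜ[F] ⁅f, ⁅f, w⁆⁆
            - ((2 : LaurentSeries F) * z) • ((1 : LaurentSeries F) ⊗ₜ[F] w)) ∧
      ⁅(1 : LaurentSeries F) ⊗ₜ[F] ⁅f, ⁅f, v⁆⁆
          + ((2 : LaurentSeries F) * z) • ((1 : LaurentSeries F) ⊗ₜ[F] v),
        (1 : LaurentSeries F) ⊗ₜ[F] ⁅f, ⁅f, v₁⁆⁆
          + ((2 : LaurentSeries F) * z) • ((1 : LaurentSeries F) ⊗ₜ[F] v₁)⁆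
        ∈ Submodule.span (LaurentSeries F)
            {w | ∃ a : g, ⁅x, a⁆ = 0 ∧ ⁅f, a⁆ = 0 ∧
              w = (1 : LaurentSeries F) ⊗ₜ[F] a}) :=
  stmt9_general e x f hef hxe hxf hdec z Hk Hr hHk hHr
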